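/- Let h : (R,∞) → [0,∞) be measurable (R > 0), and define the Hilbert space F consisting of ξ ∈ L²((R,∞), h dz) whose weak derivative ξ′ belongs to L²((R,∞), z·h(z) dz), with norm ‖ξ‖² = ‖ξ‖²_{L²(h dz)} + ‖ξ′‖²_{L²(z h dz)}. Suppose there exist ε, ϱ > 0 and a sequence r_n → ∞ such that for all n, ∫_{r_n}^∞ h(z) dz > ϱ ∫_{r_n − ε}^{r_n} z h(z) dz. Then the inclusion map F ↪ L²((R,∞), h dz) is not a compact operator. -/

import Mathlib

/-!
Normalise the smooth ramp that rises from `0` at `s - ε` to `1` at `s` by the square root of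
the tail mass `G s = ∫_s^∞ h`. Its `L²(h)` mass is at most `G (s - ε) / G s ≤ 1 + 1 / (ϱ R)`,
because `z ≥ R` on the window, and its derivative, of size `O(1/ε)` and supported in the window,
contributes at most `O(1 / (ε² ϱ))`; so these functions are bounded in `F` uniformly in `s`.
For two ramps at `s ≤ t - ε` the difference equals `G s ^ (-1/2)` on `(s, t - ε]`, so their
squared `L²(h)` distance is at least `∫_s^{t-ε} h / G s`, which tends to `1` as `t → ∞`.
Hence no subsequence of the ramps at `s = r n` is Cauchy in `L²(h)`.
-/

open MeasureTheory Set Filter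

namespace WeightedEmbedding

open Topology Real

lemma deriv_smoothTransition_eq_zero {t : ℝ} (ht : t ∉ Icc (0 : ℝ) 1) :
    deriv smoothTransition t = 0 := by
  rcases not_and_or.mp ht with ht | ht
  · have : smoothTransition =ᶠ[𝓝 t] fun _ => 0 :=
      eventually_of_mem (Iio_mem_nhds (not_le.mp ht)) fun x hx =>
        smoothTransition.zero_of_nonpos hx.out.le
    rw [this.deriv_eq, deriv_const]
  · have : smoothTransition =ᶠ[𝓝 t] fun _ => 1 :=
      eventually_of_mem (Ioi_mem_nhds (not_le.mp ht)) fun x hx =>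
        smoothTransition.one_of_one_le hx.out.le
    rw [this.deriv_eq, deriv_const]

lemma exists_abs_deriv_smoothTransition_le : ∃ C, ∀ t, |deriv smoothTransition t| ≤ C :=
  (smoothTransition.contDiff (n := 1).continuous_deriv le_rfl).bounded_above_of_compact_support
    (HasCompactSupport.intro isCompact_Icc fun _ => deriv_smoothTransition_eq_zero)

noncomputable def ramp (ε s z : ℝ) : ℝ := smoothTransition ((z - (s - ε)) / ε)

section Ramp

variable {ε s z : ℝ}

lemma ramp_of_le (hε : 0 < ε) (hz : z ≤ s - ε) : ramp ε s z = 0 :=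
  smoothTransition.zero_of_nonpos (div_nonpos_of_nonpos_of_nonneg (by linarith) hε.le)

lemma ramp_of_ge (hε : 0 < ε) (hz : s ≤ z) : ramp ε s z = 1 :=
  smoothTransition.one_of_one_le ((one_le_div hε).mpr (by linarith))

lemma hasDerivAt_ramp (ε s z : ℝ) :
    HasDerivAt (ramp ε s) (deriv smoothTransition ((z - (s - ε)) / ε) / ε) z := by
  have hlin : HasDerivAt (fun z => (z - (s - ε)) / ε) (1 / ε) z :=
    ((hasDerivAt_id z).sub_const (s - ε)).div_const ε
  rw [div_eq_mul_one_div]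
  exact ((smoothTransition.contDiff (n := 1)).differentiable one_ne_zero _).hasDerivAt.comp z hlin

lemma deriv_ramp_eq_zero (hε : 0 < ε) (hz : z ∉ Icc (s - ε) s) : deriv (ramp ε s) z = 0 := by
  rw [(hasDerivAt_ramp ε s z).deriv, deriv_smoothTransition_eq_zero, zero_div]
  rintro ⟨h0, h1⟩
  rw [le_div_iff₀ hε] at h0
  rw [div_le_one hε] at h1
  exact hz ⟨by linarith, by linarith⟩

lemma continuous_ramp (ε s : ℝ) : Continuous (ramp ε s) :=
  smoothTransition.continuous.comp ((continuous_id.sub continuous_const).div_const ε)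

lemma abs_deriv_ramp_le {C : ℝ} (hC : ∀ t, |deriv smoothTransition t| ≤ C) (hε : 0 < ε) :
    |deriv (ramp ε s) z| ≤ C / ε := by
  rw [(hasDerivAt_ramp ε s z).deriv, abs_div, abs_of_pos hε]
  exact div_le_div_of_nonneg_right (hC _) hε.le

end Ramp

section Integrals

variable {α : Type*} [MeasurableSpace α] {μ : Measure α} {S : Set α}

lemma integrableOn_and_setIntegral_le_of_le {f g : α → ℝ} (hS : MeasurableSet S)
    (hf : AEStronglyMeasurable f (μ.restrict S)) (hg : IntegrableOn g S μ)
    (hf0 : ∀ x ∈ S, 0 ≤ f x) (hfg : ∀ x ∈ S, f x ≤ g x) :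
    IntegrableOn f S μ ∧ ∫ x in S, f x ∂μ ≤ ∫ x in S, g x ∂μ := by
  have hfi : IntegrableOn f S μ := hg.mono' hf <| ae_restrict_of_forall_mem hS fun x hx => by
    rw [Real.norm_eq_abs, abs_of_nonneg (hf0 x hx)]
    exact hfg x hx
  exact ⟨hfi, setIntegral_mono_on hfi hg hS hfg⟩

lemma integrableOn_sub_sq_mul {f g w : α → ℝ} (hS : MeasurableSet S)
    (hm : AEStronglyMeasurable (fun x => (f x - g x) ^ 2 * w x) (μ.restrict S))
    (hf : IntegrableOn (fun x => f x ^ 2 * w x) S μ)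
    (hg : IntegrableOn (fun x => g x ^ 2 * w x) S μ) (hw : ∀ x ∈ S, 0 ≤ w x) :
    IntegrableOn (fun x => (f x - g x) ^ 2 * w x) S μ :=
  (integrableOn_and_setIntegral_le_of_le hS hm ((hf.add hg).const_mul 2)
    (fun x hx => mul_nonneg (sq_nonneg _) (hw x hx))
    fun x hx => by
      show _ ≤ 2 * (f x ^ 2 * w x + g x ^ 2 * w x)
      nlinarith [mul_nonneg (sq_nonneg (f x + g x)) (hw x hx)]).1

end Integrals

noncomputable def tailMass (h : ℝ → ℝ) (s : ℝ) : ℝ := ∫ z in Ioi s, h z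

noncomputable def bump (h : ℝ → ℝ) (ε s z : ℝ) : ℝ := ramp ε s z / √(tailMass h s)

lemma continuous_bump (h : ℝ → ℝ) (ε s : ℝ) : Continuous (bump h ε s) :=
  (continuous_ramp ε s).div_const _

section Window

variable {h : ℝ → ℝ} {R ε ϱ s : ℝ}

lemma setIntegral_window_nonneg (hR : 0 < R) (hRs : R < s - ε) (hh : ∀ z ∈ Ioi R, 0 ≤ h z) :
    0 ≤ ∫ z in Icc (s - ε) s, z * h z :=
  setIntegral_nonneg measurableSet_Icc fun z hz =>
    mul_nonneg (by linarith [hz.1]) (hh z (mem_Ioi.mpr (by linarith [hz.1])))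

lemma tailMass_pos (hR : 0 < R) (hRs : R < s - ε) (hh : ∀ z ∈ Ioi R, 0 ≤ h z) (hϱ : 0 < ϱ)
    (hdom : ϱ * ∫ z in Icc (s - ε) s, z * h z < tailMass h s) : 0 < tailMass h s :=
  (mul_nonneg hϱ.le (setIntegral_window_nonneg hR hRs hh)).trans_lt hdom

lemma integrableOn_Ioi_of_tailMass_pos (hs : 0 < tailMass h s) : IntegrableOn h (Ioi s) :=
  Integrable.of_integral_ne_zero hs.ne'

lemma integrableOn_window (hint : IntegrableOn h (Ioi (s - ε))) :
    IntegrableOn (fun z => z * h z) (Icc (s - ε) s) := by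
  have hIcc : IntegrableOn h (Icc (s - ε) s) :=
    (integrableOn_Icc_iff_integrableOn_Ioc).mpr (hint.mono_set Ioc_subset_Ioi_self)
  exact hIcc.continuousOn_mul continuousOn_id isCompact_Icc

lemma setIntegral_Ioi_sub_le (hR : 0 < R) (hε : 0 < ε) (hRs : R < s - ε)
    (hh : ∀ z ∈ Ioi R, 0 ≤ h z) (hϱ : 0 < ϱ) (hint : IntegrableOn h (Ioi (s - ε)))
    (hdom : ϱ * ∫ z in Icc (s - ε) s, z * h z < tailMass h s) :
    ∫ z in Ioi (s - ε), h z ≤ (1 + 1 / (ϱ * R)) * tailMass h s := by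
  have hIoc : IntegrableOn h (Ioc (s - ε) s) := hint.mono_set Ioc_subset_Ioi_self
  have hsplit : ∫ z in Ioi (s - ε), h z = (∫ z in Ioc (s - ε) s, h z) + tailMass h s := by
    rw [tailMass, ← setIntegral_union Ioc_disjoint_Ioi_same measurableSet_Ioi hIoc
      (hint.mono_set (Ioi_subset_Ioi (by linarith))), Ioc_union_Ioi_eq_Ioi (by linarith)]
  have hwindow : ∫ z in Ioc (s - ε) s, h z ≤ (∫ z in Icc (s - ε) s, z * h z) / R := by
    rw [le_div_iff₀ hR, ← integral_mul_const, integral_Icc_eq_integral_Ioc]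
    refine setIntegral_mono_on (hIoc.mul_const R)
      ((integrableOn_Icc_iff_integrableOn_Ioc).mp (integrableOn_window hint))
      measurableSet_Ioc fun z hz => ?_
    nlinarith [hz.1, hh z (mem_Ioi.mpr (by linarith [hz.1]))]
  have hwindow_le : (∫ z in Icc (s - ε) s, z * h z) / R ≤ tailMass h s / ϱ / R :=
    div_le_div_of_nonneg_right ((le_div_iff₀' hϱ).mpr hdom.le) hR.le
  rw [hsplit, add_mul, one_mul, add_comm, mul_comm, ← div_eq_mul_one_div, ← div_div]
  linarith

lemma sq_bump_le (hs : 0 < tailMass h s) (z : ℝ) :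
    bump h ε s z ^ 2 ≤ 1 / tailMass h s := by
  have h0 := smoothTransition.nonneg ((z - (s - ε)) / ε)
  have h1 := smoothTransition.le_one ((z - (s - ε)) / ε)
  rw [bump, div_pow, sq_sqrt hs.le]
  exact div_le_div_of_nonneg_right (by unfold ramp; nlinarith) hs.le

lemma hasDerivAt_bump (h : ℝ → ℝ) (ε s z : ℝ) :
    HasDerivAt (bump h ε s) (deriv (ramp ε s) z / √(tailMass h s)) z :=
  (hasDerivAt_ramp ε s z).differentiableAt.hasDerivAt.div_const _

lemma sq_deriv_bump_le {C : ℝ} (hC : ∀ t, |deriv smoothTransition t| ≤ C) (hε : 0 < ε)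
    (hs : 0 < tailMass h s) (z : ℝ) :
    deriv (bump h ε s) z ^ 2 ≤ (C / ε) ^ 2 / tailMass h s := by
  rw [(hasDerivAt_bump h ε s z).deriv, div_pow, sq_sqrt hs.le, ← sq_abs]
  exact div_le_div_of_nonneg_right
    (pow_le_pow_left₀ (abs_nonneg _) (abs_deriv_ramp_le hC hε) 2) hs.le

lemma bump_sq_integral_le (hR : 0 < R) (hε : 0 < ε) (hϱ : 0 < ϱ) (hRs : R < s - ε)
    (hmeas : Measurable h) (hh : ∀ z ∈ Ioi R, 0 ≤ h z) (hint : IntegrableOn h (Ioi (s - ε)))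
    (hdom : ϱ * ∫ z in Icc (s - ε) s, z * h z < tailMass h s) :
    IntegrableOn (fun z => bump h ε s z ^ 2 * h z) (Ioi R) ∧
      ∫ z in Ioi R, bump h ε s z ^ 2 * h z ≤ 1 + 1 / (ϱ * R) := by
  have hs := tailMass_pos hR hRs hh hϱ hdom
  have hvanish : ∀ z ∈ Ioi R \ Ioi (s - ε), bump h ε s z ^ 2 * h z = 0 := fun z hz => by
    rw [bump, ramp_of_le hε (not_lt.mp hz.2)]
    simp
  obtain ⟨hi, hle⟩ := integrableOn_and_setIntegral_le_of_le measurableSet_Ioi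
    (((continuous_bump h ε s).pow 2).measurable.mul hmeas).aestronglyMeasurable
    (hint.const_mul (1 / tailMass h s))
    (fun z hz => mul_nonneg (sq_nonneg _) (hh z (mem_Ioi.mpr (hRs.trans hz))))
    fun z hz => mul_le_mul_of_nonneg_right (sq_bump_le hs z) (hh z (mem_Ioi.mpr (hRs.trans hz)))
  refine ⟨hi.of_forall_sdiff_eq_zero measurableSet_Ioi hvanish, ?_⟩
  rw [setIntegral_eq_of_subset_of_forall_sdiff_eq_zero measurableSet_Ioi
    (Ioi_subset_Ioi hRs.le) hvanish]
  calc _ ≤ 1 / tailMass h s * ∫ z in Ioi (s - ε), h z := by rwa [← integral_const_mul]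
    _ ≤ 1 / tailMass h s * ((1 + 1 / (ϱ * R)) * tailMass h s) := by
      gcongr
      exact setIntegral_Ioi_sub_le hR hε hRs hh hϱ hint hdom
    _ = 1 + 1 / (ϱ * R) := by field_simp

lemma bump_deriv_sq_integral_le {C : ℝ} (hC : ∀ t, |deriv smoothTransition t| ≤ C)
    (hR : 0 < R) (hε : 0 < ε) (hϱ : 0 < ϱ) (hRs : R < s - ε)
    (hmeas : Measurable h) (hh : ∀ z ∈ Ioi R, 0 ≤ h z) (hint : IntegrableOn h (Ioi (s - ε)))
    (hdom : ϱ * ∫ z in Icc (s - ε) s, z * h z < tailMass h s) :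
    IntegrableOn (fun z => deriv (bump h ε s) z ^ 2 * (z * h z)) (Ioi R) ∧
      ∫ z in Ioi R, deriv (bump h ε s) z ^ 2 * (z * h z) ≤ (C / ε) ^ 2 / ϱ := by
  have hs := tailMass_pos hR hRs hh hϱ hdom
  have hwin : Icc (s - ε) s ⊆ Ioi R := fun z hz => mem_Ioi.mpr (hRs.trans_le hz.1)
  have hvanish : ∀ z ∈ Ioi R \ Icc (s - ε) s, deriv (bump h ε s) z ^ 2 * (z * h z) = 0 :=
    fun z hz => by
      rw [(hasDerivAt_bump h ε s z).deriv, deriv_ramp_eq_zero hε hz.2]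
      simp
  have hzh : ∀ z ∈ Icc (s - ε) s, 0 ≤ z * h z := fun z hz =>
    mul_nonneg (hR.trans (hwin hz)).le (hh z (hwin hz))
  obtain ⟨hi, hle⟩ := integrableOn_and_setIntegral_le_of_le measurableSet_Icc
    (((measurable_deriv _).pow_const 2).mul (measurable_id.mul hmeas)).aestronglyMeasurable
    ((integrableOn_window hint).const_mul ((C / ε) ^ 2 / tailMass h s))
    (fun z hz => mul_nonneg (sq_nonneg _) (hzh z hz))
    fun z hz => mul_le_mul_of_nonneg_right (sq_deriv_bump_le hC hε hs z) (hzh z hz)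
  refine ⟨hi.of_forall_sdiff_eq_zero measurableSet_Ioi hvanish, ?_⟩
  rw [setIntegral_eq_of_subset_of_forall_sdiff_eq_zero measurableSet_Ioi hwin hvanish]
  calc _ ≤ (C / ε) ^ 2 / tailMass h s * ∫ z in Icc (s - ε) s, z * h z := by
        rwa [← integral_const_mul]
    _ ≤ (C / ε) ^ 2 / tailMass h s * (tailMass h s / ϱ) := by
      gcongr
      exact (le_div_iff₀' hϱ).mpr hdom.le
    _ = (C / ε) ^ 2 / ϱ := by field_simp

lemma div_tailMass_le_integral_sub_bump_sq {t : ℝ} (hε : 0 < ε) (hRs : R < s - ε)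
    (hst : s ≤ t - ε) (hmeas : Measurable h) (hh : ∀ z ∈ Ioi R, 0 ≤ h z)
    (hs : 0 < tailMass h s) (hint_s : IntegrableOn (fun z => bump h ε s z ^ 2 * h z) (Ioi R))
    (hint_t : IntegrableOn (fun z => bump h ε t z ^ 2 * h z) (Ioi R)) :
    (∫ z in s..t - ε, h z) / tailMass h s ≤
      ∫ z in Ioi R, (bump h ε t z - bump h ε s z) ^ 2 * h z := by
  have hsub : Ioc s (t - ε) ⊆ Ioi R := fun z hz => mem_Ioi.mpr (by linarith [hz.1])
  have hint := integrableOn_sub_sq_mul measurableSet_Ioi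
    ((((continuous_bump h ε t).sub (continuous_bump h ε s)).pow 2).measurable.mul
      hmeas).aestronglyMeasurable hint_t hint_s hh
  calc (∫ z in s..t - ε, h z) / tailMass h s
      = ∫ z in Ioc s (t - ε), (bump h ε t z - bump h ε s z) ^ 2 * h z := by
        rw [intervalIntegral.integral_of_le hst, ← integral_div]
        refine setIntegral_congr_fun measurableSet_Ioc fun z hz => ?_
        simp only [bump, ramp_of_le hε hz.2, ramp_of_ge hε hz.1.le, zero_div, zero_sub, neg_sq,
          div_pow, one_pow, sq_sqrt hs.le]
        ring
    _ ≤ _ := setIntegral_mono_set hint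
        (ae_restrict_of_forall_mem measurableSet_Ioi fun z hz => mul_nonneg (sq_nonneg _) (hh z hz))
        hsub.eventuallyLE

lemma tendsto_intervalIntegral_div_tailMass {ι : Type*} {l : Filter ι} [l.IsCountablyGenerated]
    {b : ι → ℝ} (hint : IntegrableOn h (Ioi s)) (hs : 0 < tailMass h s)
    (hb : Tendsto b l atTop) :
    Tendsto (fun i => (∫ z in s..b i, h z) / tailMass h s) l (𝓝 1) := by
  rw [← div_self hs.ne']
  exact (intervalIntegral_tendsto_integral_Ioi s hint hb).div_const (tailMass h s)

end Window

end WeightedEmbedding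

open WeightedEmbedding

/-- Lemma 5.5 of the paper: if the tail mass of `h` dominates a fixed multiple of the
`z`-weighted mass of `h` over windows `[rₙ - ε, rₙ]` with `rₙ → ∞`, then the embedding
of the weighted Sobolev space `F_R^h` (norm `‖ξ‖² = ∫ ξ² h + ∫ (ξ')² z h`) into
`L²((R,∞), h dz)` is not compact: there is a bounded sequence in `F_R^h` no subsequence
of which is Cauchy in `L²((R,∞), h dz)`. -/
theorem embedding_not_compact (R : ℝ) (hR : 0 < R) (h : ℝ → ℝ)
    (hmeas : Measurable h) (hnonneg : ∀ z ∈ Ioi R, 0 ≤ h z)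
    (ε ϱ : ℝ) (hε : 0 < ε) (hϱ : 0 < ϱ) (r : ℕ → ℝ)
    (hr : Tendsto r atTop atTop)
    (hdom : ∀ n, (∫ z in Ioi (r n), h z) > ϱ * ∫ z in Icc (r n - ε) (r n), z * h z) :
    ∃ (M : ℝ) (ξ : ℕ → ℝ → ℝ),
      (∀ n, Differentiable ℝ (ξ n)) ∧
      (∀ n, IntegrableOn (fun z => (ξ n z) ^ 2 * h z) (Ioi R)) ∧
      (∀ n, IntegrableOn (fun z => (deriv (ξ n) z) ^ 2 * (z * h z)) (Ioi R)) ∧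
      (∀ n, (∫ z in Ioi R, (ξ n z) ^ 2 * h z)
          + (∫ z in Ioi R, (deriv (ξ n) z) ^ 2 * (z * h z)) ≤ M) ∧
      ∀ φ : ℕ → ℕ, StrictMono φ →
        ¬ (∀ δ > (0:ℝ), ∃ N, ∀ m ≥ N, ∀ k ≥ N,
            (∫ z in Ioi R, (ξ (φ m) z - ξ (φ k) z) ^ 2 * h z) < δ) := by
  obtain ⟨C, hC⟩ := exists_abs_deriv_smoothTransition_le
  obtain ⟨n₁, hn₁⟩ := (hr.eventually_gt_atTop (R + ε)).exists
  have hbase : IntegrableOn h (Ioi (r n₁)) :=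
    integrableOn_Ioi_of_tailMass_pos (tailMass_pos hR (by linarith) hnonneg hϱ (hdom n₁))
  obtain ⟨n₀, hn₀⟩ := eventually_atTop.mp (hr.eventually_ge_atTop (r n₁ + ε))
  set s : ℕ → ℝ := fun n => r (n + n₀)
  have hs_far : ∀ n, r n₁ ≤ s n - ε := fun n => by linarith [hn₀ (n + n₀) (by omega)]
  have hRs : ∀ n, R < s n - ε := fun n => by linarith [hs_far n]
  have hint : ∀ n, IntegrableOn h (Ioi (s n - ε)) := fun n =>
    hbase.mono_set (Ioi_subset_Ioi (hs_far n))
  have hpos : ∀ n, 0 < tailMass h (s n) := fun n =>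
    tailMass_pos hR (hRs n) hnonneg hϱ (hdom _)
  have hL2 := fun n => bump_sq_integral_le hR hε hϱ (hRs n) hmeas hnonneg (hint n) (hdom _)
  have hH1 := fun n =>
    bump_deriv_sq_integral_le hC hR hε hϱ (hRs n) hmeas hnonneg (hint n) (hdom _)
  refine ⟨1 + 1 / (ϱ * R) + (C / ε) ^ 2 / ϱ, fun n => bump h ε (s n),
    fun n z => (hasDerivAt_bump h ε (s n) z).differentiableAt, fun n => (hL2 n).1,
    fun n => (hH1 n).1, fun n => add_le_add (hL2 n).2 (hH1 n).2, ?_⟩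
  rintro φ hφ hcauchy
  obtain ⟨N, hN⟩ := hcauchy (1 / 2) one_half_pos
  have hs_tendsto : Tendsto (fun k => s (φ k) - ε) atTop atTop :=
    tendsto_atTop_add_const_right _ (-ε)
      (hr.comp ((tendsto_add_atTop_nat n₀).comp hφ.tendsto_atTop))
  have hratio := tendsto_intervalIntegral_div_tailMass
    (integrableOn_Ioi_of_tailMass_pos (hpos (φ N))) (hpos (φ N)) hs_tendsto
  obtain ⟨k, hkN, hk_far, hk_ratio⟩ := ((eventually_ge_atTop N).and
    ((hs_tendsto.eventually_ge_atTop (s (φ N))).and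
      (hratio.eventually (lt_mem_nhds one_half_lt_one)))).exists
  linarith [hN k hkN N le_rfl, div_tailMass_le_integral_sub_bump_sq hε (hRs (φ N)) hk_far hmeas
    hnonneg (hpos (φ N)) (hL2 (φ N)).1 (hL2 (φ k)).1]
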